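/- Let A₁ and A₂ be commutative Banach algebras and A = A₁ ⊗̂ A₂, and let J₁ ⊆ A₁ and J₂ ⊆ A₂ be closed ideals. Suppose A₁ has a bounded approximate identity (a_α) and J₂ has a bounded approximate identity (b_α). Then the closure of J₁ ⊗ A₂ intersected with the closure of A₁ ⊗ J₂ equals the closure of J₁ ⊗ J₂ in A. -/

import Mathlib

open Filter

set_option maxHeartbeats 1000000

/-- Let `A = A₁ ⊗̂ A₂` be a Banach-algebra cross-norm tensor product of commutative
Banach algebras (encoded by a bilinear map `ι` that is multiplicative, satisfies
`‖ι x y‖ = ‖x‖‖y‖`, and has dense linear span of its range). If `J₁ ⊆ A₁`, `J₂ ⊆ A₂`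
are closed ideals, `A₁ has a bounded approximate identity `(a_α)` and `J₂` has a
bounded approximate identity `(b_α)`, both bounded by `C`, then
`closure(J₁ ⊗ A₂) ∩ closure(A₁ ⊗ J₂) = closure(J₁ ⊗ J₂)`. -/
theorem stmt_8 (A₁ A₂ A : Type*)
    [NormedCommRing A₁] [NormedAlgebra ℂ A₁] [CompleteSpace A₁]
    [NormedCommRing A₂] [NormedAlgebra ℂ A₂] [CompleteSpace A₂]
    [NormedCommRing A] [NormedAlgebra ℂ A] [CompleteSpace A]
    (ι : A₁ →ₗ[ℂ] A₂ →ₗ[ℂ] A)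
    (hmul : ∀ (x z : A₁) (y w : A₂), ι (x * z) (y * w) = ι x y * ι z w)
    (hnorm : ∀ (x : A₁) (y : A₂), ‖ι x y‖ = ‖x‖ * ‖y‖)
    (hdense : Dense (Submodule.span ℂ {u : A | ∃ x y, ι x y = u} : Set A))
    (J₁ : Ideal A₁) (hJ₁ : IsClosed (J₁ : Set A₁))
    (J₂ : Ideal A₂) (hJ₂ : IsClosed (J₂ : Set A₂))
    (C : ℝ) (hC : 0 < C)
    (I₁ : Type*) [Nonempty I₁] [SemilatticeSup I₁] (a : I₁ → A₁)
    (haBdd : ∀ α, ‖a α‖ ≤ C)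
    (haLim : ∀ x : A₁, Tendsto (fun α => a α * x) atTop (nhds x))
    (I₂ : Type*) [Nonempty I₂] [SemilatticeSup I₂] (b : I₂ → A₂)
    (hbmem : ∀ α, b α ∈ J₂) (hbBdd : ∀ α, ‖b α‖ ≤ C)
    (hbLim : ∀ y ∈ J₂, Tendsto (fun α => b α * y) atTop (nhds y)) :
    closure (Submodule.span ℂ {u : A | ∃ x ∈ J₁, ∃ y : A₂, ι x y = u} : Set A) ∩
      closure (Submodule.span ℂ {u : A | ∃ x : A₁, ∃ y ∈ J₂, ι x y = u} : Set A)
      = closure (Submodule.span ℂ {u : A | ∃ x ∈ J₁, ∃ y ∈ J₂, ι x y = u} : Set A) := by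
  -- the continuous bilinear map associated to ι
  set F : A₁ →L[ℂ] A₂ →L[ℂ] A :=
    LinearMap.mkContinuous₂ ι 1 (fun x y => by rw [hnorm, one_mul]) with hF
  have hFapp : ∀ x y, F x y = ι x y := fun x y => rfl
  have hFcont : Continuous (fun p : A₁ × A₂ => F p.1 p.2) :=
    F.isBoundedBilinearMap.continuous
  -- the approximate identity net in A
  set e : I₁ × I₂ → A := fun p => ι (a p.1) (b p.2) with he
  have heBdd : ∀ p, ‖e p‖ ≤ C * C := by
    intro p
    rw [he]
    simp only [hnorm]
    exact mul_le_mul (haBdd p.1) (hbBdd p.2) (norm_nonneg _) hC.le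
  have hfst : Tendsto (Prod.fst : I₁ × I₂ → I₁) atTop atTop := by
    rw [← prod_atTop_atTop_eq]; exact tendsto_fst
  have hsnd : Tendsto (Prod.snd : I₁ × I₂ → I₂) atTop atTop := by
    rw [← prod_atTop_atTop_eq]; exact tendsto_snd
  -- Step 1: for v in span(A₁ ⊗ J₂), v * e p → v
  have hspanLim : ∀ v ∈ Submodule.span ℂ {u : A | ∃ x : A₁, ∃ y ∈ J₂, ι x y = u},
      Tendsto (fun p => v * e p) atTop (nhds v) := by
    intro v hv
    induction hv using Submodule.span_induction with
    | mem v hv =>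
      obtain ⟨x, y, hy, rfl⟩ := hv
      have h1 : Tendsto (fun p : I₁ × I₂ => x * a p.1) atTop (nhds x) := by
        have := (haLim x).comp hfst
        simpa [Function.comp_def, mul_comm] using this
      have h2 : Tendsto (fun p : I₁ × I₂ => y * b p.2) atTop (nhds y) := by
        have := (hbLim y hy).comp hsnd
        simpa [Function.comp_def, mul_comm] using this
      have h3 : Tendsto (fun p : I₁ × I₂ => ι (x * a p.1) (y * b p.2)) atTop
          (nhds (ι x y)) := by
        have := hFcont.tendsto (x, y)
        have := this.comp (h1.prodMk_nhds h2)
        simpa [hFapp, Function.comp_def] using this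
      simpa only [he, hmul] using h3
    | zero => simpa using tendsto_const_nhds
    | add v w _ _ hvt hwt =>
      have := hvt.add hwt
      simpa [add_mul] using this
    | smul c v _ hvt =>
      have := hvt.const_smul c
      simpa [smul_mul_assoc] using this
  -- Step 2: extension to the closure via uniform boundedness
  have hclLim : ∀ u ∈ closure (Submodule.span ℂ
      {u : A | ∃ x : A₁, ∃ y ∈ J₂, ι x y = u} : Set A),
      Tendsto (fun p => u * e p) atTop (nhds u) := by
    intro u hu
    rw [Metric.tendsto_atTop]
    intro ε hε
    have hCC : (0:ℝ) < C * C + 1 := by positivity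
    have hδ : (0:ℝ) < ε / (3 * (C * C + 1)) := by positivity
    obtain ⟨v, hv, hvu⟩ := Metric.mem_closure_iff.mp hu _ hδ
    have hvlim := hspanLim v hv
    rw [Metric.tendsto_atTop] at hvlim
    obtain ⟨N, hN⟩ := hvlim (ε / 3) (by positivity)
    refine ⟨N, fun p hp => ?_⟩
    have h1 : dist (u * e p) (v * e p) ≤ ε / (3 * (C * C + 1)) * (C * C) := by
      rw [dist_eq_norm, ← sub_mul]
      calc ‖(u - v) * e p‖ ≤ ‖u - v‖ * ‖e p‖ := norm_mul_le _ _
        _ ≤ ε / (3 * (C * C + 1)) * (C * C) := by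
            apply mul_le_mul _ (heBdd p) (norm_nonneg _) hδ.le
            rw [← dist_eq_norm]; exact hvu.le
    have h2 := hN p hp
    have key : ε / (3 * (C * C + 1)) * (C * C) ≤ ε / 3 := by
      have hle : (C * C : ℝ) ≤ C * C + 1 := by linarith
      calc ε / (3 * (C * C + 1)) * (C * C) ≤ ε / (3 * (C * C + 1)) * (C * C + 1) :=
            mul_le_mul_of_nonneg_left hle hδ.le
        _ = ε / 3 := by field_simp
    have key2 : ε / (3 * (C * C + 1)) ≤ ε / 3 := by
      rw [div_le_div_iff₀ (by positivity) (by norm_num)]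
      nlinarith [mul_nonneg hε.le (mul_self_nonneg C)]
    have h3 : dist v u < ε / 3 := by
      rw [dist_comm]; exact hvu.trans_le key2
    calc dist (u * e p) u ≤ dist (u * e p) (v * e p) + dist (v * e p) v + dist v u :=
          dist_triangle4 _ _ _ _
      _ < ε / 3 + ε / 3 + ε / 3 :=
          add_lt_add_of_lt_of_lt (add_lt_add_of_le_of_lt (h1.trans key) h2) h3
      _ = ε := by ring
  -- Step 3: multiplication by e p maps closure(J₁ ⊗ A₂) into closure(J₁ ⊗ J₂)
  have hmap : ∀ p, ∀ u ∈ closure (Submodule.span ℂ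
      {u : A | ∃ x ∈ J₁, ∃ y : A₂, ι x y = u} : Set A),
      u * e p ∈ closure (Submodule.span ℂ
        {u : A | ∃ x ∈ J₁, ∃ y ∈ J₂, ι x y = u} : Set A) := by
    intro p u hu
    have hcont : Continuous (fun v : A => v * e p) := continuous_mul_right _
    have hmaps : ∀ v ∈ (Submodule.span ℂ {u : A | ∃ x ∈ J₁, ∃ y : A₂, ι x y = u} : Set A),
        v * e p ∈ (Submodule.span ℂ {u : A | ∃ x ∈ J₁, ∃ y ∈ J₂, ι x y = u} : Set A) := by
      intro v hv
      induction hv using Submodule.span_induction with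
      | mem v hv =>
        obtain ⟨x, hx, y, rfl⟩ := hv
        show ι x y * ι (a p.1) (b p.2) ∈ _
        rw [← hmul]
        exact Submodule.subset_span ⟨x * a p.1, J₁.mul_mem_right _ hx,
          y * b p.2, J₂.mul_mem_left _ (hbmem p.2), rfl⟩
      | zero =>
        show (0 : A) * e p ∈ _
        rw [zero_mul]
        exact (Submodule.span ℂ _).zero_mem
      | add v w _ _ hvm hwm =>
        show (v + w) * e p ∈ _
        rw [add_mul]
        exact (Submodule.span ℂ _).add_mem hvm hwm
      | smul c v _ hvm =>
        show (c • v) * e p ∈ _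
        rw [smul_mul_assoc]
        exact (Submodule.span ℂ _).smul_mem c hvm
    exact map_mem_closure (f := fun v : A => v * e p) hcont hu hmaps
  -- conclusion
  apply Set.eq_of_subset_of_subset
  · rintro u ⟨hu1, hu2⟩
    have hlim := hclLim u hu2
    exact isClosed_closure.mem_of_tendsto hlim
      (Filter.Eventually.of_forall (fun p => hmap p u hu1))
  · intro u hu
    constructor
    · refine closure_mono (Submodule.span_mono ?_) hu
      rintro w ⟨x, hx, y, _, rfl⟩; exact ⟨x, hx, y, rfl⟩
    · refine closure_mono (Submodule.span_mono ?_) hu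
      rintro w ⟨x, hx, y, hy, rfl⟩; exact ⟨x, y, hy, rfl⟩
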